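/- arXiv:2411.13380 — 3 statements merged into one kernel-verified Lean document; each statement's English description precedes it below -/
import Mathlib

section
/- Let G be a 2-connected graph with more than 3 vertices and let u be a vertex of degree 2 with neighbors v and w. Then the graph G' obtained by contracting the edge {u,v} satisfies tw(G') = tw(G). -/
/-- A tree decomposition of a simple graph `G`. -/
structure TreeDecomp {V : Type} (G : SimpleGraph V) where
  ι : Type
  T : SimpleGraph ι
  tree : T.IsTree
  bag : ι → Finset V
  mem_bag : ∀ v : V, ∃ i, v ∈ bag i
  edge_bag : ∀ u v : V, G.Adj u v → ∃ i, u ∈ bag i ∧ v ∈ bag i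
  coherent : ∀ v : V, (T.induce {i | v ∈ bag i}).Connected

/-- The treewidth of a simple graph: the least `w` admitting a tree
decomposition all of whose bags have at most `w + 1` vertices. -/
noncomputable def treewidth {V : Type} (G : SimpleGraph V) : ℕ :=
  sInf {w | ∃ D : TreeDecomp G, ∀ i, (D.bag i).card ≤ w + 1}

/-- Contract the edge `{u, v}` of `G`: the vertex `v` is removed and `u`
absorbs its neighbors. -/
def contractEdge {V : Type} (G : SimpleGraph V) (u v : V) :
    SimpleGraph {x : V // x ≠ v} :=
  SimpleGraph.fromRel (fun a b =>
    G.Adj a b ∨ ((a : V) = u ∧ G.Adj v b) ∨ ((b : V) = u ∧ G.Adj (a : V) v))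

/-- A graph is 2-connected if it is connected, has at least 3 vertices, and
removing any single vertex leaves it connected. -/
def IsTwoConnected {V : Type} (G : SimpleGraph V) : Prop :=
  G.Connected ∧ 3 ≤ Nat.card V ∧ ∀ v : V, (G.induce {x | x ≠ v}).Connected

/-!
Contracting an edge never increases treewidth: the images of the bags under the quotient map
form a tree decomposition of the contraction, as every vertex of `G'` has a connected preimage.

Conversely, `u` is reinserted into a decomposition of `G'` by hanging a new leaf bag `{u, v, w}`
off a bag containing the edge `vw` of `G'`; this does not increase the width once `tw G' ≥ 2`.
Since `G` is 2-connected on more than three vertices, `G'` is connected of minimum degree at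
least `2`, hence contains a cycle, and by the Helly property of subtrees some bag of every tree
decomposition contains three vertices of that cycle.
-/

namespace SimpleGraph

section Trees

variable {ι : Type*} {T : SimpleGraph ι}

theorem exists_isPath_support_subset_of_connected_induce {S : Set ι}
    (hS : (T.induce S).Connected) {a b : ι} (ha : a ∈ S) (hb : b ∈ S) :
    ∃ p : T.Walk a b, p.IsPath ∧ ∀ x ∈ p.support, x ∈ S := by
  classical
  obtain ⟨q⟩ := hS ⟨a, ha⟩ ⟨b, hb⟩
  let q' := q.map (Embedding.induce S).toHom
  refine ⟨q'.bypass, q'.bypass_isPath, fun x hx => ?_⟩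
  have hx' := q'.support_bypass_subset_support hx
  rw [Walk.support_map, List.mem_map] at hx'
  obtain ⟨y, -, rfl⟩ := hx'
  exact y.2

theorem IsAcyclic.support_subset_of_connected_induce (hT : T.IsAcyclic) {S : Set ι}
    (hS : (T.induce S).Connected) {a b : ι} (ha : a ∈ S) (hb : b ∈ S)
    (p : T.Walk a b) (hp : p.IsPath) : ∀ x ∈ p.support, x ∈ S := by
  obtain ⟨q, hq, hqS⟩ := exists_isPath_support_subset_of_connected_induce hS ha hb
  obtain rfl : p = q :=
    congrArg Subtype.val ((hT.subsingleton_path a b).elim ⟨p, hp⟩ ⟨q, hq⟩)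
  exact hqS

theorem Walk.exists_isPath_through_common_vertex {a b : ι} (P : T.Walk a b) :
    ∀ {c : ι} (Q : T.Walk b c), P.IsPath → Q.IsPath →
      ∃ R : T.Walk a c, R.IsPath ∧ (∀ y ∈ R.support, y ∈ P.support ∨ y ∈ Q.support) ∧
        ∃ x ∈ R.support, x ∈ P.support ∧ x ∈ Q.support := by
  classical
  induction P with
  | nil =>
    exact fun Q _ hQ => ⟨Q, hQ, fun y hy => .inr hy, _, Q.start_mem_support,
      Walk.start_mem_support _, Q.start_mem_support⟩
  | @cons a a' b h P' ih =>
    intro c Q hP hQ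
    by_cases haQ : a ∈ Q.support
    · exact ⟨Q.dropUntil a haQ, hQ.dropUntil haQ,
        fun y hy => .inr (Q.support_dropUntil_subset_support haQ hy),
        a, Walk.start_mem_support _, Walk.start_mem_support _, haQ⟩
    obtain ⟨R, hR, hRsub, x, hxR, hxP, hxQ⟩ := ih Q hP.of_cons hQ
    have haR : a ∉ R.support := fun ha =>
      (hRsub a ha).elim ((Walk.cons_isPath_iff h P').1 hP).2 haQ
    refine ⟨.cons h R, hR.cons haR, fun y hy => ?_, x, by simp [hxR], by simp [hxP], hxQ⟩
    rcases List.mem_cons.1 (Walk.support_cons h R ▸ hy) with rfl | hy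
    · exact .inl (Walk.start_mem_support _)
    · exact (hRsub y hy).imp (fun h => by simp [h]) id

/-- Helly property of subtrees. -/
theorem IsAcyclic.nonempty_inter_of_connected_induce (hT : T.IsAcyclic) {A B C : Set ι}
    (hA : (T.induce A).Connected) (hB : (T.induce B).Connected) (hC : (T.induce C).Connected)
    (hAB : (A ∩ B).Nonempty) (hBC : (B ∩ C).Nonempty) (hCA : (C ∩ A).Nonempty) :
    (A ∩ B ∩ C).Nonempty := by
  obtain ⟨a, haA, haB⟩ := hAB
  obtain ⟨b, hbB, hbC⟩ := hBC
  obtain ⟨c, hcC, hcA⟩ := hCA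
  obtain ⟨P, hP, hPB⟩ := exists_isPath_support_subset_of_connected_induce hB haB hbB
  obtain ⟨Q, hQ, hQC⟩ := exists_isPath_support_subset_of_connected_induce hC hbC hcC
  obtain ⟨R, hR, -, x, hxR, hxP, hxQ⟩ := P.exists_isPath_through_common_vertex Q hP hQ
  have hxA := hT.support_subset_of_connected_induce hA haA hcA R hR x hxR
  exact ⟨x, ⟨hxA, hPB x hxP⟩, hQC x hxQ⟩

end Trees

section AddLeaf

variable {ι κ : Type*} {T : SimpleGraph ι}

theorem IsAcyclic.map (f : ι ↪ κ) (hT : T.IsAcyclic) : (T.map f).IsAcyclic := by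
  classical
  intro x c hc
  have hrange : ∀ y ∈ c.support, y ∈ Set.range f := by
    intro y hy
    have hadj := (c.rotate y hy).adj_snd (hc.rotate hy).not_nil
    obtain ⟨a, -, -, rfl, -⟩ := (map_adj _ _ _ _).1 hadj
    exact ⟨a, rfl⟩
  have hc' : (c.induce _ hrange).IsCycle := by
    let e := Embedding.induce (G := T.map f) (Set.range f)
    rw [← Walk.isCycle_map_iff_of_injective (f := e.toHom) e.injective, Walk.map_induce]
    exact hc
  let e := (Embedding.map f T).isoInduceRange.symm
  exact hT _ (hc'.map (f := e.toHom) e.injective)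

def addLeaf (T : SimpleGraph ι) (i₀ : ι) : SimpleGraph (Option ι) :=
  T.map Function.Embedding.some ⊔ edge none (some i₀)

variable (i₀ : ι)

theorem addLeaf_adj_some_some {i j : ι} : (T.addLeaf i₀).Adj (some i) (some j) ↔ T.Adj i j := by
  simp only [addLeaf, sup_adj, map_adj, edge_adj]
  simp

theorem addLeaf_adj_none_some : (T.addLeaf i₀).Adj none (some i₀) := by
  simp only [addLeaf, sup_adj, map_adj, edge_adj]
  simp

def addLeafHom : T →g T.addLeaf i₀ := ⟨some, (addLeaf_adj_some_some i₀).2⟩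

theorem IsTree.addLeaf (hT : T.IsTree) : (T.addLeaf i₀).IsTree := by
  refine ⟨(connected_iff_exists_forall_reachable _).2 ⟨some i₀, ?_⟩, ?_⟩
  · rintro (_ | i)
    · exact (addLeaf_adj_none_some i₀).symm.reachable
    · exact (hT.connected.preconnected i₀ i).map (addLeafHom i₀)
  · refine (hT.isAcyclic.map Function.Embedding.some).sup_edge_of_not_reachable ?_
    rintro ⟨_ | ⟨h, -⟩⟩
    simp only [map_adj] at h
    simp at h

theorem Connected.induce_image_some {S : Set ι} (hS : (T.induce S).Connected) :
    ((T.addLeaf i₀).induce (some '' S)).Connected := by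
  refine hS.map (induceHom (addLeafHom i₀) (Set.mapsTo_image _ _)) ?_
  rintro ⟨_, i, hi, rfl⟩
  exact ⟨⟨i, hi⟩, rfl⟩

end AddLeaf

section Degree

variable {V : Type} {G : SimpleGraph V}

theorem Preconnected.exists_adj_of_mem_of_notMem (hG : G.Preconnected) {S : Set V} {a b : V}
    (ha : a ∈ S) (hb : b ∉ S) : ∃ x ∈ S, ∃ y ∉ S, G.Adj x y := by
  obtain ⟨p⟩ := hG a b
  obtain ⟨d, -, hd₁, hd₂⟩ := p.exists_boundary_dart S ha hb
  exact ⟨d.fst, hd₁, d.snd, hd₂, d.adj⟩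

theorem exists_adj_of_connected_induce_ne {y : V} (hG : (G.induce {x | x ≠ y}).Connected)
    {S : Set V} {a b : V} (ha : a ∈ S) (hay : a ≠ y) (hb : b ∉ S) (hby : b ≠ y) :
    ∃ x ∈ S, ∃ z ∉ S, z ≠ y ∧ G.Adj x z := by
  obtain ⟨x, hx, z, hz, hxz⟩ := hG.preconnected.exists_adj_of_mem_of_notMem
    (S := Subtype.val ⁻¹' S) (a := ⟨a, hay⟩) (b := ⟨b, hby⟩) ha hb
  exact ⟨x, hx, z, hz, z.2, hxz⟩

theorem exists_adj_ne_of_connected_induce_ne {x y b : V} (hG : (G.induce {x | x ≠ y}).Connected)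
    (hxy : x ≠ y) (hbx : b ≠ x) (hby : b ≠ y) : ∃ t, G.Adj x t ∧ t ≠ y := by
  obtain ⟨_, rfl, t, -, hty, hxt⟩ :=
    exists_adj_of_connected_induce_ne hG (S := {x}) rfl hxy hbx hby
  exact ⟨t, hxt, hty⟩

theorem Connected.not_isAcyclic_of_neighborSet_nontrivial [Finite V] (hG : G.Connected)
    (h : ∀ x, (G.neighborSet x).Nontrivial) : ¬G.IsAcyclic := by
  classical
  have := Fintype.ofFinite V
  intro hacyc
  obtain ⟨x⟩ := hG.nonempty
  obtain ⟨a, -, b, -, hab⟩ := h x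
  have : Nontrivial V := ⟨a, b, hab⟩
  have hmin := le_minDegree_of_forall_le_degree (G := G) 2 fun y =>
    Finset.one_lt_card_iff_nontrivial.2 (by
      show ((G.neighborFinset y : Set V)).Nontrivial
      rw [coe_neighborFinset]
      exact h y)
  rw [IsTree.minDegree_eq_one_of_nontrivial ⟨hG, hacyc⟩] at hmin
  omega

end Degree

end SimpleGraph

namespace TreeDecomp

open SimpleGraph

variable {V : Type} {G : SimpleGraph V}

theorem connected_induce_support (D : TreeDecomp G) {a b : V} (p : G.Walk a b) :
    (D.T.induce {i | ∃ x ∈ p.support, x ∈ D.bag i}).Connected := by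
  induction p with
  | @nil a =>
    rw [show {i | ∃ x ∈ (Walk.nil : G.Walk a a).support, x ∈ D.bag i} = {i | a ∈ D.bag i} by
      ext; simp]
    exact D.coherent a
  | @cons a b c h p ih =>
    have hsplit : {i | ∃ x ∈ (Walk.cons h p).support, x ∈ D.bag i} =
        {i | a ∈ D.bag i} ∪ {i | ∃ x ∈ p.support, x ∈ D.bag i} := by
      ext; simp
    obtain ⟨i, hia, hib⟩ := D.edge_bag a b h
    rw [hsplit]
    exact induce_union_connected (D.coherent a).preconnected ih.preconnected
      ⟨i, hia, b, p.start_mem_support, hib⟩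

theorem connected_induce_biUnion (D : TreeDecomp G) {X : Set V} (hX : (G.induce X).Connected) :
    (D.T.induce {i | ∃ x ∈ X, x ∈ D.bag i}).Connected := by
  obtain ⟨⟨x₀, hx₀⟩⟩ := hX.nonempty
  obtain ⟨i₀, hi₀⟩ := D.mem_bag x₀
  refine induce_connected_of_patches i₀ ⟨x₀, hx₀, hi₀⟩ fun {i} ⟨x, hx, hi⟩ => ?_
  obtain ⟨p⟩ := hX ⟨x₀, hx₀⟩ ⟨x, hx⟩
  let q := p.map (Embedding.induce X).toHom
  refine ⟨{j | ∃ y ∈ q.support, y ∈ D.bag j}, fun j ⟨y, hy, hj⟩ => ⟨y, ?_, hj⟩,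
    ⟨x₀, q.start_mem_support, hi₀⟩, ⟨x, q.end_mem_support, hi⟩,
    (D.connected_induce_support q).preconnected _ _⟩
  rw [Walk.support_map, List.mem_map] at hy
  obtain ⟨y, -, rfl⟩ := hy
  exact y.2

theorem exists_three_le_card_bag_of_isPath (D : TreeDecomp G) {x y : V} (hxy : G.Adj x y)
    (p : G.Walk x y) (hp : p.IsPath) (hxyp : s(x, y) ∉ p.edges) :
    ∃ i, 3 ≤ (D.bag i).card := by
  classical
  cases p with
  | nil => exact absurd rfl hxy.ne
  | @cons _ x₁ _ h₁ q =>
  cases q with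
  | nil => simp at hxyp
  | @cons _ x₂ _ h₂ r =>
  -- `p = x → x₁ → x₂ ⇝ y`: apply Helly to the subtrees of `x`, of `x₁` and of `r = x₂ ⇝ y`.
  simp only [Walk.cons_isPath_iff, Walk.support_cons, List.mem_cons, not_or] at hp
  obtain ⟨⟨-, hx₁r⟩, -, hxr⟩ := hp
  obtain ⟨j, hx₁j, hx₂j⟩ := D.edge_bag x₁ x₂ h₂
  obtain ⟨k, hyk, hxk⟩ := D.edge_bag y x hxy.symm
  obtain ⟨i, ⟨hx, hx₁⟩, t, htr, ht⟩ := D.tree.isAcyclic.nonempty_inter_of_connected_induce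
    (D.coherent x) (D.coherent x₁) (D.connected_induce_support r) (D.edge_bag x x₁ h₁)
    ⟨j, hx₁j, x₂, r.start_mem_support, hx₂j⟩ ⟨k, ⟨y, r.end_mem_support, hyk⟩, hxk⟩
  exact ⟨i, Finset.two_lt_card.2 ⟨x, hx, x₁, hx₁, t, ht, h₁.ne, fun h => hxr (h ▸ htr),
    fun h => hx₁r (h ▸ htr)⟩⟩

theorem exists_three_le_card_bag_of_not_isAcyclic (D : TreeDecomp G) (hG : ¬G.IsAcyclic) :
    ∃ i, 3 ≤ (D.bag i).card := by
  classical
  obtain ⟨x, y, hxy, hbr⟩ : ∃ x y, G.Adj x y ∧ ¬G.IsBridge s(x, y) := by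
    simpa [isAcyclic_iff_forall_adj_isBridge] using hG
  obtain ⟨p, hp⟩ : ∃ p : G.Walk x y, s(x, y) ∉ p.edges := by
    simpa [isBridge_iff_forall_walk_mem_edges] using hbr
  exact D.exists_three_le_card_bag_of_isPath hxy p.bypass p.bypass_isPath
    fun h => hp (p.edges_bypass_subset_edges h)

def single [Fintype V] (G : SimpleGraph V) : TreeDecomp G where
  ι := Unit
  T := ⊥
  tree := ⟨connected_bot_iff.2 ⟨inferInstance, inferInstance⟩, isAcyclic_bot⟩
  bag _ := Finset.univ
  mem_bag x := ⟨(), Finset.mem_univ x⟩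
  edge_bag x y _ := ⟨(), Finset.mem_univ x, Finset.mem_univ y⟩
  coherent x := (connected_iff _).2 ⟨.of_subsingleton, ⟨⟨(), Finset.mem_univ x⟩⟩⟩

/-- `H` is obtained from `G` by contracting the connected fibres of `f`. -/
def map {W : Type} [DecidableEq W] {H : SimpleGraph W} (D : TreeDecomp G) (f : V → W)
    (hadj : ∀ a b, H.Adj a b → ∃ x y, f x = a ∧ f y = b ∧ G.Adj x y)
    (hfib : ∀ a, (G.induce (f ⁻¹' {a})).Connected) : TreeDecomp H where
  ι := D.ι
  T := D.T
  tree := D.tree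
  bag i := (D.bag i).image f
  mem_bag a := by
    obtain ⟨⟨x, hx⟩⟩ := (hfib a).nonempty
    obtain ⟨i, hi⟩ := D.mem_bag x
    exact ⟨i, Finset.mem_image.2 ⟨x, hi, hx⟩⟩
  edge_bag a b h := by
    obtain ⟨x, y, rfl, rfl, hxy⟩ := hadj a b h
    obtain ⟨i, hx, hy⟩ := D.edge_bag x y hxy
    exact ⟨i, Finset.mem_image_of_mem f hx, Finset.mem_image_of_mem f hy⟩
  coherent a := by
    rw [show {i | a ∈ (D.bag i).image f} = {i | ∃ x ∈ f ⁻¹' {a}, x ∈ D.bag i} by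
      ext; simp [and_comm]]
    exact D.connected_induce_biUnion (hfib a)

def addLeaf {u : V} {H : SimpleGraph {x // x ≠ u}} (D : TreeDecomp H)
    (hGH : ∀ a b : {x // x ≠ u}, G.Adj a b → H.Adj a b)
    (B : Finset V) (i₀ : D.ι) (huB : u ∈ B) (hNB : G.neighborSet u ⊆ B)
    (hBi₀ : ∀ x (hx : x ≠ u), x ∈ B → ⟨x, hx⟩ ∈ D.bag i₀) : TreeDecomp G where
  ι := Option D.ι
  T := D.T.addLeaf i₀
  tree := D.tree.addLeaf i₀
  bag o := o.elim B fun i => (D.bag i).map (Function.Embedding.subtype _)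
  mem_bag x := by
    by_cases hx : x = u
    · exact ⟨none, hx ▸ huB⟩
    · obtain ⟨i, hi⟩ := D.mem_bag ⟨x, hx⟩
      exact ⟨some i, Finset.mem_map_of_mem _ hi⟩
  edge_bag a b hab := by
    by_cases ha : a = u
    · subst ha
      exact ⟨none, huB, hNB hab⟩
    by_cases hb : b = u
    · subst hb
      exact ⟨none, hNB hab.symm, huB⟩
    obtain ⟨i, hai, hbi⟩ := D.edge_bag ⟨a, ha⟩ ⟨b, hb⟩ (hGH _ _ hab)
    exact ⟨some i, Finset.mem_map_of_mem _ hai, Finset.mem_map_of_mem _ hbi⟩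
  coherent x := by
    by_cases hx : x = u
    · subst hx
      rw [show {o : Option D.ι | x ∈ o.elim B _} = {none} by
        ext (_ | i) <;> simp [huB]]
      simp
    have hS := (D.coherent ⟨x, hx⟩).induce_image_some i₀
    by_cases hxB : x ∈ B
    · rw [show {o : Option D.ι | x ∈ o.elim B _} = {none} ∪ some '' {i | ⟨x, hx⟩ ∈ D.bag i} by
        ext (_ | i) <;> simp [hxB, hx]]
      exact connected_induce_union (by simp) hS.preconnected rfl ⟨i₀, hBi₀ x hx hxB, rfl⟩
        (addLeaf_adj_none_some i₀)
    · rw [show {o : Option D.ι | x ∈ o.elim B _} = some '' {i | ⟨x, hx⟩ ∈ D.bag i} by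
        ext (_ | i) <;> simp [hxB, hx]]
      exact hS

end TreeDecomp

section Treewidth

variable {V : Type} {G : SimpleGraph V}

theorem treewidth_le_of_forall_card_bag_le (D : TreeDecomp G) {k : ℕ}
    (h : ∀ i, (D.bag i).card ≤ k + 1) : treewidth G ≤ k :=
  Nat.sInf_le ⟨D, h⟩

theorem exists_treeDecomp_card_bag_le_treewidth [Fintype V] (G : SimpleGraph V) :
    ∃ D : TreeDecomp G, ∀ i, (D.bag i).card ≤ treewidth G + 1 :=
  Nat.sInf_mem (s := {w | ∃ D : TreeDecomp G, ∀ i, (D.bag i).card ≤ w + 1})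
    ⟨Fintype.card V, TreeDecomp.single G, fun _ => Nat.le_succ_of_le le_rfl⟩

theorem two_le_treewidth_of_not_isAcyclic [Fintype V] (hG : ¬G.IsAcyclic) :
    2 ≤ treewidth G := by
  obtain ⟨D, hD⟩ := exists_treeDecomp_card_bag_le_treewidth G
  obtain ⟨i, hi⟩ := D.exists_three_le_card_bag_of_not_isAcyclic hG
  have := hD i
  omega

end Treewidth

section Contraction

open SimpleGraph

variable {V : Type} {G : SimpleGraph V} {u v w : V}

theorem contractEdge_adj_of_adj {a b : {x // x ≠ v}} (h : G.Adj a b) :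
    (contractEdge G u v).Adj a b :=
  (fromRel_adj _ _ _).2 ⟨fun hab => h.ne (congrArg Subtype.val hab), .inl (.inl h)⟩

theorem contractEdge_adj_mk_of_adj (hu : u ≠ v) {b : {x // x ≠ v}} (hb : (b : V) ≠ u)
    (h : G.Adj v b) : (contractEdge G u v).Adj ⟨u, hu⟩ b :=
  (fromRel_adj _ _ _).2
    ⟨fun hab => hb (congrArg Subtype.val hab).symm, .inl (.inr (.inl ⟨rfl, h⟩))⟩

theorem exists_adj_ne_ne_of_neighborSet_eq_pair (hG : (G.induce {x | x ≠ w}).Connected)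
    (hnbr : G.neighborSet u = {v, w}) {z : V} (hzu : z ≠ u) (hzv : z ≠ v) (hzw : z ≠ w) :
    ∃ t, G.Adj v t ∧ t ≠ u ∧ t ≠ w := by
  have huw : G.Adj u w := by simp [← mem_neighborSet, hnbr]
  obtain ⟨x, hx, t, ht, htw, hxt⟩ := exists_adj_of_connected_induce_ne hG (S := {u, v})
    (Set.mem_insert u _) huw.ne (by simp [hzu, hzv]) hzw
  simp only [Set.mem_insert_iff, Set.mem_singleton_iff, not_or] at hx ht
  rcases hx with rfl | rfl
  · have : t ∈ G.neighborSet x := hxt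
    simp [hnbr, ht.2, htw] at this
  · exact ⟨t, hxt, ht.1, htw⟩

theorem neighborSet_contractEdge_nontrivial (hrem : ∀ y, (G.induce {x | x ≠ y}).Connected)
    (hnbr : G.neighborSet u = {v, w}) (hvw : v ≠ w) {z : V} (hzu : z ≠ u) (hzv : z ≠ v)
    (hzw : z ≠ w) (x : {x // x ≠ u}) : ((contractEdge G v u).neighborSet x).Nontrivial := by
  have huv : G.Adj u v := by simp [← mem_neighborSet, hnbr]
  have huw : G.Adj u w := by simp [← mem_neighborSet, hnbr]
  have hvw' : (contractEdge G v u).Adj ⟨v, huv.ne'⟩ ⟨w, huw.ne'⟩ :=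
    contractEdge_adj_mk_of_adj _ hvw.symm huw
  by_cases hxv : (x : V) = v
  · obtain rfl : x = ⟨v, huv.ne'⟩ := Subtype.ext hxv
    obtain ⟨t, hvt, htu, htw⟩ :=
      exists_adj_ne_ne_of_neighborSet_eq_pair (hrem w) hnbr hzu hzv hzw
    exact ⟨_, hvw', ⟨t, htu⟩, contractEdge_adj_of_adj hvt,
      fun h => htw (congrArg Subtype.val h).symm⟩
  by_cases hxw : (x : V) = w
  · obtain rfl : x = ⟨w, huw.ne'⟩ := Subtype.ext hxw
    obtain ⟨t, hwt, htu, htv⟩ := exists_adj_ne_ne_of_neighborSet_eq_pair (hrem v)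
      (hnbr.trans (Set.pair_comm v w)) hzu hzw hzv
    exact ⟨_, hvw'.symm, ⟨t, htu⟩, contractEdge_adj_of_adj hwt,
      fun h => htv (congrArg Subtype.val h).symm⟩
  have hxu : ∀ {t}, G.Adj x t → t ≠ u := by
    rintro t hxt rfl
    have : (x : V) ∈ G.neighborSet t := hxt.symm
    simp [hnbr, hxv, hxw] at this
  obtain ⟨t₁, hxt₁, -⟩ :=
    exists_adj_ne_of_connected_induce_ne (hrem u) x.2 (Ne.symm hxv) huv.ne'
  obtain ⟨t₂, hxt₂, ht₂⟩ :=
    exists_adj_ne_of_connected_induce_ne (hrem t₁) hxt₁.ne (x.2).symm (hxu hxt₁).symm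
  exact ⟨⟨t₁, hxu hxt₁⟩, contractEdge_adj_of_adj hxt₁, ⟨t₂, hxu hxt₂⟩,
    contractEdge_adj_of_adj hxt₂, fun h => ht₂ (congrArg Subtype.val h).symm⟩

section Quotient

variable [DecidableEq V]

def contractEdgeProj (h : u ≠ v) (x : V) : {x : V // x ≠ v} :=
  if hx : x = v then ⟨u, h⟩ else ⟨x, hx⟩

theorem contractEdgeProj_coe (h : u ≠ v) (a : {x : V // x ≠ v}) :
    contractEdgeProj h a = a :=
  dif_neg a.2

theorem contractEdgeProj_self (h : u ≠ v) : contractEdgeProj h v = ⟨u, h⟩ :=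
  dif_pos rfl

theorem connected_induce_preimage_contractEdgeProj (h : G.Adj u v) (a : {x : V // x ≠ v}) :
    (G.induce (contractEdgeProj h.ne ⁻¹' {a})).Connected := by
  by_cases ha : (a : V) = u
  · rw [show contractEdgeProj h.ne ⁻¹' {a} = {u, v} by
      ext x; by_cases hx : x = v <;> simp [contractEdgeProj, hx, Subtype.ext_iff, ← ha, eq_comm]]
    exact induce_pair_connected_of_adj h
  · rw [show contractEdgeProj h.ne ⁻¹' {a} = {(a : V)} by
      ext x
      by_cases hx : x = v <;>
        simp [contractEdgeProj, hx, Subtype.ext_iff, Ne.symm ha, Ne.symm a.2]]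
    simp

theorem exists_adj_of_contractEdge_adj (h : u ≠ v) {a b : {x : V // x ≠ v}}
    (hab : (contractEdge G u v).Adj a b) :
    ∃ x y, contractEdgeProj h x = a ∧ contractEdgeProj h y = b ∧ G.Adj x y := by
  have key : ∀ a b : {x : V // x ≠ v},
      (G.Adj a b ∨ ((a : V) = u ∧ G.Adj v b) ∨ ((b : V) = u ∧ G.Adj a v)) →
      ∃ x y, contractEdgeProj h x = a ∧ contractEdgeProj h y = b ∧ G.Adj x y := by
    rintro a b (hab | ⟨ha, hab⟩ | ⟨hb, hab⟩)
    · exact ⟨a, b, contractEdgeProj_coe h a, contractEdgeProj_coe h b, hab⟩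
    · exact ⟨v, b, by rw [contractEdgeProj_self]; exact Subtype.ext ha.symm,
        contractEdgeProj_coe h b, hab⟩
    · exact ⟨a, v, contractEdgeProj_coe h a,
        by rw [contractEdgeProj_self]; exact Subtype.ext hb.symm, hab⟩
  obtain ⟨-, hab | hba⟩ := fromRel_adj _ a b |>.1 hab
  · exact key a b hab
  · obtain ⟨x, y, hx, hy, hxy⟩ := key b a hba
    exact ⟨y, x, hy, hx, hxy.symm⟩

theorem treewidth_contractEdge_le [Fintype V] (h : G.Adj u v) :
    treewidth (contractEdge G u v) ≤ treewidth G := by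
  obtain ⟨D, hD⟩ := exists_treeDecomp_card_bag_le_treewidth G
  exact treewidth_le_of_forall_card_bag_le
    (D.map (contractEdgeProj h.ne) (fun _ _ => exists_adj_of_contractEdge_adj h.ne)
      (connected_induce_preimage_contractEdgeProj h))
    fun i => Finset.card_image_le.trans (hD i)

end Quotient

section Suppression

variable [Fintype V]

theorem not_isAcyclic_contractEdge (hrem : ∀ y, (G.induce {x | x ≠ y}).Connected)
    (hcard : 3 < Fintype.card V) (hnbr : G.neighborSet u = {v, w}) (hvw : v ≠ w) :
    ¬(contractEdge G v u).IsAcyclic := by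
  classical
  obtain ⟨z, -, hz⟩ := Finset.exists_mem_notMem_of_card_lt_card
    (Finset.card_le_three.trans_lt hcard : ({u, v, w} : Finset V).card < Finset.univ.card)
  simp only [Finset.mem_insert, Finset.mem_singleton, not_or] at hz
  have hconn : (contractEdge G v u).Connected :=
    (hrem u).mono fun _ _ => contractEdge_adj_of_adj
  exact hconn.not_isAcyclic_of_neighborSet_nontrivial
    (neighborSet_contractEdge_nontrivial hrem hnbr hvw hz.1 hz.2.1 hz.2.2)

theorem treewidth_le_treewidth_contractEdge [DecidableEq V] (hnbr : G.neighborSet u = {v, w})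
    (hvw : v ≠ w) (h2 : 2 ≤ treewidth (contractEdge G v u)) :
    treewidth G ≤ treewidth (contractEdge G v u) := by
  have huv : G.Adj u v := by simp [← mem_neighborSet, hnbr]
  have huw : G.Adj u w := by simp [← mem_neighborSet, hnbr]
  obtain ⟨D, hD⟩ := exists_treeDecomp_card_bag_le_treewidth (contractEdge G v u)
  obtain ⟨i₀, hvi₀, hwi₀⟩ :=
    D.edge_bag _ _ (contractEdge_adj_mk_of_adj huv.ne' (b := ⟨w, huw.ne'⟩) hvw.symm huw)
  refine treewidth_le_of_forall_card_bag_le (D.addLeaf (fun _ _ => contractEdge_adj_of_adj)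
    {u, v, w} i₀ (by simp) (by simp [hnbr, Set.subset_def]) ?_) ?_
  · rintro x hx hxB
    simp only [Finset.mem_insert, Finset.mem_singleton] at hxB
    rcases hxB with rfl | rfl | rfl
    exacts [absurd rfl hx, hvi₀, hwi₀]
  · rintro (_ | i)
    · exact Finset.card_le_three.trans (by omega)
    · exact (Finset.card_map _).trans_le (hD i)

end Suppression

end Contraction

/-- Suppressing a degree-2 vertex `u` (contracting the edge `{u, v}` to one of
its two neighbors) in a 2-connected graph on more than 3 vertices preserves
treewidth. -/
theorem treewidth_suppress_degree_two {V : Type} [Fintype V] [DecidableEq V]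
    (G : SimpleGraph V) (u v w : V)
    (h2c : IsTwoConnected G) (hcard : 3 < Fintype.card V)
    (hvw : v ≠ w) (hnbr : G.neighborSet u = {v, w}) :
    treewidth (contractEdge G v u) = treewidth G := by
  obtain ⟨-, -, hrem⟩ := h2c
  have hvu : G.Adj v u := (show v ∈ G.neighborSet u by simp [hnbr]).symm
  have h2 := two_le_treewidth_of_not_isAcyclic (not_isAcyclic_contractEdge hrem hcard hnbr hvw)
  exact le_antisymm (treewidth_contractEdge_le hvu)
    (treewidth_le_treewidth_contractEdge hnbr hvw h2)
end

section
/- For a graph G with vertex expansion x_α(G) (for some α with 1/|V(G)| ≤ α ≤ 1), the treewidth of G satisfies tw(G) ≥ ⌊x_α(G) · (α/2) · |V(G)|⌋. -/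
/-- The external neighborhood of a vertex set `X`. -/
def extNbhd {V : Type} (G : SimpleGraph V) (X : Set V) : Set V :=
  {v : V | v ∉ X ∧ ∃ u ∈ X, G.Adj u v}

/-- The vertex expansion of `G` with parameter `α`:
the minimum of `|N(X)| / |X|` over nonempty sets `X` with `|X| ≤ α |V|`. -/
noncomputable def vertexExpansion {V : Type} [Fintype V]
    (G : SimpleGraph V) (α : ℝ) : ℝ :=
  sInf {r : ℝ | ∃ X : Set V, X.Nonempty ∧ (X.ncard : ℝ) ≤ α * Fintype.card V ∧
    r = (extNbhd G X).ncard / X.ncard}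

namespace TreeDecomp

open SimpleGraph

variable {V : Type} {G : SimpleGraph V} (D : TreeDecomp G)

/-- `i` is reachable from `t'` avoiding `t`. -/
def Reach (t t' i : D.ι) : Prop := ∃ w : D.T.Walk t' i, t ∉ w.support

/-- vertices all of whose bags lie strictly on the `t'` side of `t`. -/
def branch (t t' : D.ι) : Set V := {v | ∀ i, v ∈ D.bag i → D.Reach t t' i}

/-- walk inside the support of `v`. -/
lemma exists_walk_bag (v : V) {i j : D.ι} (hi : v ∈ D.bag i) (hj : v ∈ D.bag j) :
    ∃ w : D.T.Walk i j, ∀ x ∈ w.support, v ∈ D.bag x := by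
  have hc := D.coherent v
  obtain ⟨w⟩ := hc.preconnected ⟨i, hi⟩ ⟨j, hj⟩
  refine ⟨w.map ⟨Subtype.val, fun h => h⟩, ?_⟩
  intro x hx
  rw [SimpleGraph.Walk.support_map, List.mem_map] at hx
  obtain ⟨⟨y, hy⟩, -, rfl⟩ := hx
  exact hy

/-- core acyclicity lemma: a walk between two distinct neighbors of `t`
cannot avoid `t`. -/
lemma no_detour {t a b : D.ι} (ha : D.T.Adj t a) (hb : D.T.Adj t b) (hab : a ≠ b)
    (w : D.T.Walk a b) (hw : t ∉ w.support) : False := by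
  classical
  have hp1 : t ∉ (w.toPath : D.T.Walk a b).support :=
    fun h => hw (SimpleGraph.Walk.support_toPath_subset w h)
  have hP2 : (SimpleGraph.Walk.cons ha.symm (SimpleGraph.Walk.cons hb
      SimpleGraph.Walk.nil)).IsPath := by
    rw [SimpleGraph.Walk.cons_isPath_iff]
    constructor
    · rw [SimpleGraph.Walk.cons_isPath_iff]
      exact ⟨SimpleGraph.Walk.IsPath.nil, by simp [hb.ne]⟩
    · simp [ha.ne', hab]
  have := D.tree.IsAcyclic.path_unique w.toPath ⟨_, hP2⟩
  rw [this] at hp1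
  simp at hp1

lemma mem_branch_of_bag {t t' : D.ι} {v : V} {i : D.ι} (hi : D.Reach t t' i)
    (hvi : v ∈ D.bag i) (hvt : v ∉ D.bag t) : v ∈ D.branch t t' := by
  intro j hj
  obtain ⟨w, hw⟩ := hi
  obtain ⟨p, hp⟩ := D.exists_walk_bag v hvi hj
  refine ⟨w.append p, ?_⟩
  rw [SimpleGraph.Walk.support_append]
  intro h
  rcases List.mem_append.1 h with h | h
  · exact hw h
  · exact hvt (hp _ (List.mem_of_mem_tail h))

lemma notMem_bag_of_mem_branch {t t' : D.ι} {v : V} (hv : v ∈ D.branch t t') :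
    v ∉ D.bag t := by
  intro hvt
  obtain ⟨w, hw⟩ := hv t hvt
  exact hw w.end_mem_support

lemma adj_mem_branch {t t' : D.ι} {v u : V} (hv : v ∈ D.branch t t')
    (hadj : G.Adj v u) (hu : u ∉ D.bag t) : u ∈ D.branch t t' := by
  obtain ⟨i, hvi, hui⟩ := D.edge_bag v u hadj
  exact D.mem_branch_of_bag (hv i hvi) hui hu

/-- helper: peel the first step of a path. -/
lemma first_step {t i : D.ι} (w : D.T.Walk t i) (hw : w.IsPath) (hne : t ≠ i) :
    ∃ t', D.T.Adj t t' ∧ ∃ q : D.T.Walk t' i, t ∉ q.support ∧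
      q.support ⊆ w.support := by
  cases w with
  | nil => exact absurd rfl hne
  | cons h q =>
    rw [SimpleGraph.Walk.cons_isPath_iff] at hw
    refine ⟨_, h, q, hw.2, ?_⟩
    rw [SimpleGraph.Walk.support_cons]
    exact List.subset_cons_self _ _

lemma exists_branch {t : D.ι} {v : V} (hv : v ∉ D.bag t) :
    ∃ t', D.T.Adj t t' ∧ v ∈ D.branch t t' := by
  classical
  obtain ⟨i, hi⟩ := D.mem_bag v
  have hne : t ≠ i := fun h => hv (h ▸ hi)
  obtain ⟨w⟩ := D.tree.isConnected.preconnected t i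
  obtain ⟨t', hadj, q, hq, -⟩ := D.first_step w.toPath.val w.toPath.prop hne
  exact ⟨t', hadj, D.mem_branch_of_bag ⟨q, hq⟩ hi hv⟩

lemma branch_disjoint {t t'₁ t'₂ : D.ι} (h1 : D.T.Adj t t'₁) (h2 : D.T.Adj t t'₂)
    (hne : t'₁ ≠ t'₂) {v : V} (hv1 : v ∈ D.branch t t'₁) (hv2 : v ∈ D.branch t t'₂) :
    False := by
  obtain ⟨i, hi⟩ := D.mem_bag v
  obtain ⟨w₁, hw₁⟩ := hv1 i hi
  obtain ⟨w₂, hw₂⟩ := hv2 i hi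
  refine D.no_detour h1 h2 hne (w₁.append w₂.reverse) ?_
  rw [SimpleGraph.Walk.support_append]
  intro h
  rcases List.mem_append.1 h with h | h
  · exact hw₁ h
  · refine hw₂ ?_
    have := List.mem_of_mem_tail h
    rwa [SimpleGraph.Walk.support_reverse, List.mem_reverse] at this

lemma mem_bag_head {t t' : D.ι} (hadj : D.T.Adj t t') {v u : V}
    (hv : v ∈ D.branch t t') (hG : G.Adj v u) (hu : u ∉ D.branch t t') :
    u ∈ D.bag t' := by
  classical
  have hut : u ∈ D.bag t := by
    by_contra h
    exact hu (D.adj_mem_branch hv hG h)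
  obtain ⟨i, hvi, hui⟩ := D.edge_bag v u hG
  obtain ⟨r, hr⟩ := hv i hvi
  obtain ⟨q, hq⟩ := D.exists_walk_bag u hui hut
  -- P : path from t to i through t'
  have hrP : t ∉ (r.toPath : D.T.Walk t' i).support :=
    fun h => hr (SimpleGraph.Walk.support_toPath_subset r h)
  have hP : (SimpleGraph.Walk.cons hadj (r.toPath : D.T.Walk t' i)).IsPath := by
    rw [SimpleGraph.Walk.cons_isPath_iff]
    exact ⟨r.toPath.prop, hrP⟩
  have huniq := D.tree.IsAcyclic.path_unique q.toPath
      (SimpleGraph.Path.reverse ⟨_, hP⟩)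
  have ht' : t' ∈ (q.toPath : D.T.Walk i t).support := by
    rw [huniq]
    show t' ∈ (SimpleGraph.Walk.cons hadj (r.toPath : D.T.Walk t' i)).reverse.support
    rw [SimpleGraph.Walk.support_reverse, List.mem_reverse,
      SimpleGraph.Walk.support_cons]
    exact List.mem_cons_of_mem _ (SimpleGraph.Walk.start_mem_support _)
  exact hq _ (SimpleGraph.Walk.support_toPath_subset q ht')

lemma branch_sub {t t' t'' : D.ι} (hadj : D.T.Adj t t') (hadj2 : D.T.Adj t' t'')
    (hne : t'' ≠ t) : D.branch t' t'' ⊆ D.branch t t' := by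
  intro v hv j hj
  obtain ⟨w, hw⟩ := hv j hj
  classical
  have htw : t ∉ w.support := by
    intro h
    exact D.no_detour hadj2 hadj.symm hne (w.takeUntil t h)
      (fun hc => hw (SimpleGraph.Walk.support_takeUntil_subset w h hc))
  refine ⟨SimpleGraph.Walk.cons hadj2 w, ?_⟩
  rw [SimpleGraph.Walk.support_cons]
  intro h
  rcases List.mem_cons.1 h with h | h
  · exact hadj.ne h
  · exact htw h

lemma exists_away {t t' : D.ι} (hadj : D.T.Adj t t') {v : V}
    (hv : v ∈ D.branch t t') (hvt' : v ∉ D.bag t') :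
    ∃ t'', D.T.Adj t' t'' ∧ t'' ≠ t ∧ v ∈ D.branch t' t'' := by
  classical
  obtain ⟨i, hi⟩ := D.mem_bag v
  obtain ⟨w, hw⟩ := hv i hi
  have hne : t' ≠ i := fun h => hvt' (h ▸ hi)
  have hwP : t ∉ (w.toPath : D.T.Walk t' i).support :=
    fun h => hw (SimpleGraph.Walk.support_toPath_subset w h)
  obtain ⟨t'', hadj2, q, hq, hsub⟩ := D.first_step w.toPath.val w.toPath.prop hne
  have ht'' : t'' ≠ t := fun h =>
    hwP (h ▸ hsub q.start_mem_support)
  exact ⟨t'', hadj2, ht'', D.mem_branch_of_bag ⟨q, hq⟩ hi hvt'⟩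

/-- distance from a node to the support of a vertex. -/
noncomputable def dS (t : D.ι) (v : V) : ℕ :=
  sInf ((fun i => D.T.dist t i) '' {i | v ∈ D.bag i})

lemma dS_lt {t t' t'' : D.ι} (hadj : D.T.Adj t t') (hadj2 : D.T.Adj t' t'')
    (hne : t'' ≠ t) {v : V} (hv : v ∈ D.branch t' t'') :
    D.dS t' v < D.dS t v := by
  classical
  have hvt : v ∉ D.bag t := by
    intro hvt
    obtain ⟨w, hw⟩ := hv t hvt
    exact D.no_detour hadj2 hadj.symm hne w hw
  -- pick i₀ achieving dS t v
  have hne' : ((fun i => D.T.dist t i) '' {i | v ∈ D.bag i}).Nonempty := by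
    obtain ⟨i, hi⟩ := D.mem_bag v
    exact ⟨_, ⟨i, hi, rfl⟩⟩
  obtain ⟨i₀, hi₀, hdist⟩ := Nat.sInf_mem hne'
  -- every walk from t to i₀ goes through t'
  have hthrough : ∀ c : D.T.Walk t i₀, t' ∈ c.support := by
    intro c
    by_contra hc
    obtain ⟨w, hw⟩ := hv i₀ hi₀
    refine D.no_detour hadj.symm hadj2 hne.symm ?_ ?_
    · exact c.append w.reverse
    · rw [SimpleGraph.Walk.support_append]
      intro h
      rcases List.mem_append.1 h with h | h
      · exact hc h
      · refine hw ?_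
        have := List.mem_of_mem_tail h
        rwa [SimpleGraph.Walk.support_reverse, List.mem_reverse] at this
  obtain ⟨c, hc⟩ := D.tree.isConnected.exists_walk_length_eq_dist t i₀
  have ht'c := hthrough c
  have hsplit := c.take_spec ht'c
  have hlen : (c.takeUntil t' ht'c).length + (c.dropUntil t' ht'c).length
      = c.length := by
    rw [← SimpleGraph.Walk.length_append, hsplit]
  have htake : 1 ≤ (c.takeUntil t' ht'c).length := by
    by_contra h
    push_neg at h
    exact hadj.ne (SimpleGraph.Walk.eq_of_length_eq_zero (Nat.lt_one_iff.1 h))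
  have hdist' : D.dS t v = D.T.dist t i₀ := hdist.symm
  have hdrop : (c.dropUntil t' ht'c).length < D.dS t v := by
    rw [hdist', ← hc]
    omega
  have h1 : D.dS t' v ≤ D.T.dist t' i₀ :=
    Nat.sInf_le ⟨i₀, hi₀, rfl⟩
  have h2 : D.T.dist t' i₀ ≤ (c.dropUntil t' ht'c).length :=
    SimpleGraph.dist_le _
  omega

/-- the potential function for the descent. -/
noncomputable def phi [Fintype V] (t t' : D.ι) : ℕ :=
  ∑ v ∈ (Set.toFinite (D.branch t t')).toFinset, D.dS t v

lemma phi_lt [Fintype V] {t t' t'' : D.ι} (hadj : D.T.Adj t t') (hadj2 : D.T.Adj t' t'')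
    (hne : t'' ≠ t) (hnon : (D.branch t' t'').Nonempty) :
    D.phi t' t'' < D.phi t t' := by
  classical
  have hsub : D.branch t' t'' ⊆ D.branch t t' := D.branch_sub hadj hadj2 hne
  unfold phi
  calc ∑ v ∈ (Set.toFinite (D.branch t' t'')).toFinset, D.dS t' v
      < ∑ v ∈ (Set.toFinite (D.branch t' t'')).toFinset, D.dS t v := by
        apply Finset.sum_lt_sum_of_nonempty
        · obtain ⟨v, hv⟩ := hnon
          exact ⟨v, (Set.Finite.mem_toFinset _).2 hv⟩
        · intro v hv
          exact D.dS_lt hadj hadj2 hne ((Set.Finite.mem_toFinset _).1 hv)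
    _ ≤ ∑ v ∈ (Set.toFinite (D.branch t t')).toFinset, D.dS t v := by
        apply Finset.sum_le_sum_of_subset
        intro v hv
        rw [Set.Finite.mem_toFinset] at hv ⊢
        exact hsub hv

end TreeDecomp

section Counting

variable {V : Type} [Fintype V]

lemma ncard_sUnion_eq (F : Finset (Set V))
    (hdisj : ∀ A ∈ F, ∀ B ∈ F, A ≠ B → Disjoint A B) :
    (⋃₀ (F : Set (Set V))).ncard = ∑ A ∈ F, A.ncard := by
  classical
  induction F using Finset.induction_on with
  | empty => simp
  | @insert A F' hA ih =>
    rw [Finset.coe_insert, Set.sUnion_insert, Finset.sum_insert hA]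
    rw [Set.ncard_union_eq ?_ (Set.toFinite _) (Set.toFinite _)]
    · rw [ih (fun B hB C hC hBC => hdisj B (Finset.mem_insert_of_mem hB) C
        (Finset.mem_insert_of_mem hC) hBC)]
    · rw [Set.disjoint_sUnion_right]
      intro B hB
      exact hdisj A (Finset.mem_insert_self _ _) B (Finset.mem_insert_of_mem hB)
        (fun h => hA (h ▸ hB))

lemma greedy_family {F : Finset (Set V)} {β : ℝ} (hβ : 0 ≤ β)
    (hcard : ∀ s ∈ F, ((s.ncard : ℝ)) ≤ β)
    (htot : β < ∑ s ∈ F, (s.ncard : ℝ)) :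
    ∃ F' ⊆ F, β < ∑ s ∈ F', ((s.ncard : ℝ)) ∧ ∑ s ∈ F', ((s.ncard : ℝ)) ≤ 2 * β := by
  classical
  induction F using Finset.induction_on with
  | empty => simp at htot; linarith
  | @insert A F' hA ih =>
    by_cases h : β < ∑ s ∈ F', ((s.ncard : ℝ))
    · obtain ⟨F'', h1, h2, h3⟩ := ih (fun s hs => hcard s (Finset.mem_insert_of_mem hs)) h
      exact ⟨F'', h1.trans (Finset.subset_insert _ _), h2, h3⟩
    · push_neg at h
      refine ⟨insert A F', subset_rfl, ?_, ?_⟩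
      · rwa [Finset.sum_insert hA] at htot ⊢
      · rw [Finset.sum_insert hA]
        have := hcard A (Finset.mem_insert_self _ _)
        linarith

end Counting

namespace TreeDecomp

variable {V : Type} {G : SimpleGraph V} (D : TreeDecomp G) [Fintype V]

/-- the family of branches at `t` in directions satisfying `P`. -/
noncomputable def fam (t : D.ι) (P : D.ι → Prop) : Finset (Set V) :=
  (Set.toFinite {A : Set V | A.Nonempty ∧
    ∃ t', D.T.Adj t t' ∧ P t' ∧ A = D.branch t t'}).toFinset

lemma mem_fam {t : D.ι} {P : D.ι → Prop} {A : Set V} :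
    A ∈ D.fam t P ↔ A.Nonempty ∧ ∃ t', D.T.Adj t t' ∧ P t' ∧ A = D.branch t t' :=
  Set.Finite.mem_toFinset _

lemma fam_disjoint {t : D.ι} {P : D.ι → Prop} :
    ∀ A ∈ D.fam t P, ∀ B ∈ D.fam t P, A ≠ B → Disjoint A B := by
  intro A hA B hB hAB
  rw [mem_fam] at hA hB
  obtain ⟨-, a, ha, -, rfl⟩ := hA
  obtain ⟨-, b, hb, -, rfl⟩ := hB
  have hab : a ≠ b := fun h => hAB (h ▸ rfl)
  rw [Set.disjoint_left]
  intro v hv1 hv2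
  exact D.branch_disjoint ha hb hab hv1 hv2

lemma sUnion_fam_true {t : D.ι} :
    ⋃₀ ((D.fam t (fun _ => True)) : Set (Set V)) = ((D.bag t : Set V))ᶜ := by
  ext v
  simp only [Set.mem_sUnion, Finset.mem_coe, Set.mem_compl_iff, Finset.coe_sort_coe]
  constructor
  · rintro ⟨A, hA, hv⟩
    rw [D.mem_fam] at hA
    obtain ⟨-, a, ha, -, rfl⟩ := hA
    exact fun hc => D.notMem_bag_of_mem_branch hv hc
  · intro hv
    obtain ⟨t', hadj, hmem⟩ := D.exists_branch hv
    exact ⟨D.branch t t', D.mem_fam.2 ⟨⟨v, hmem⟩, t', hadj, trivial, rfl⟩, hmem⟩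

lemma sUnion_fam_away {t t' : D.ι} (hadj : D.T.Adj t t') :
    ⋃₀ ((D.fam t' (· ≠ t)) : Set (Set V)) = D.branch t t' \ (D.bag t' : Set V) := by
  ext v
  simp only [Set.mem_sUnion, Finset.mem_coe, Set.mem_diff]
  constructor
  · rintro ⟨A, hA, hv⟩
    rw [D.mem_fam] at hA
    obtain ⟨-, a, ha, hne, rfl⟩ := hA
    exact ⟨D.branch_sub hadj ha hne hv, fun hc => D.notMem_bag_of_mem_branch hv hc⟩
  · rintro ⟨hv, hvt'⟩
    obtain ⟨t'', hadj2, hne, hmem⟩ := D.exists_away hadj hv hvt'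
    exact ⟨D.branch t' t'', D.mem_fam.2 ⟨⟨v, hmem⟩, t'', hadj2, hne, rfl⟩, hmem⟩

lemma extNbhd_sUnion_subset {t : D.ι} {P : D.ι → Prop} {F' : Finset (Set V)}
    (hF' : F' ⊆ D.fam t P) :
    extNbhd G (⋃₀ (F' : Set (Set V))) ⊆ (D.bag t : Set V) := by
  rintro u ⟨huX, v, hvX, hadjv⟩
  obtain ⟨A, hA, hvA⟩ := hvX
  obtain ⟨-, a, ha, -, rfl⟩ := D.mem_fam.1 (hF' hA)
  by_contra hu
  exact huX ⟨_, hA, D.adj_mem_branch hvA hadjv hu⟩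

lemma exists_good_union {t : D.ι} {P : D.ι → Prop} {β : ℝ} (hβ : 0 ≤ β)
    (hmem : ∀ A ∈ D.fam t P, ((A.ncard : ℝ)) ≤ β)
    (htot : β < ∑ A ∈ D.fam t P, ((A.ncard : ℝ))) :
    ∃ X : Set V, X.Nonempty ∧ β < X.ncard ∧ (X.ncard : ℝ) ≤ 2 * β ∧
      extNbhd G X ⊆ (D.bag t : Set V) := by
  obtain ⟨F', hsub, h1, h2⟩ := greedy_family hβ hmem htot
  have hcard : ((⋃₀ (F' : Set (Set V))).ncard : ℝ) = ∑ A ∈ F', ((A.ncard : ℝ)) := by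
    rw [ncard_sUnion_eq F' (fun A hA B hB => D.fam_disjoint A (hsub hA) B (hsub hB))]
    push_cast
    rfl
  refine ⟨⋃₀ (F' : Set (Set V)), ?_, ?_, ?_, D.extNbhd_sUnion_subset hsub⟩
  · apply Set.nonempty_of_ncard_ne_zero
    intro h
    rw [h] at hcard
    simp at hcard
    linarith [hcard ▸ h1]
  · rw [hcard]; exact h1
  · rw [hcard]; exact h2

end TreeDecomp

/-- The one-node tree decomposition. -/
noncomputable def trivialDecomp {V : Type} [Fintype V] [Nonempty V] (G : SimpleGraph V) :
    TreeDecomp G where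
  ι := Unit
  T := ⊥
  tree := by
    constructor
    · constructor
      intro a b
      rw [Subsingleton.elim a b]
    · exact SimpleGraph.isAcyclic_bot
  bag _ := Finset.univ
  mem_bag v := ⟨(), Finset.mem_univ v⟩
  edge_bag u v _ := ⟨(), Finset.mem_univ u, Finset.mem_univ v⟩
  coherent v := by
    have : Nonempty ({i | v ∈ Finset.univ} : Set Unit) := ⟨⟨(), Finset.mem_univ v⟩⟩
    constructor
    intro a b
    rw [Subsingleton.elim a b]


/-- The Grohe–Marx lower bound:
`tw(G) ≥ ⌊x_α(G) · (α/2) · |V(G)|⌋`. -/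
theorem treewidth_ge_expansion {V : Type} [Fintype V] [Nonempty V]
    (G : SimpleGraph V) (α : ℝ)
    (hα1 : 1 / (Fintype.card V : ℝ) ≤ α) (hα2 : α ≤ 1) :
    ⌊vertexExpansion G α * (α / 2) * (Fintype.card V : ℝ)⌋ ≤
      (treewidth G : ℤ) := by
  classical
  set n : ℕ := Fintype.card V with hn
  have hn1 : 0 < n := Fintype.card_pos
  have hnR : (0 : ℝ) < n := by exact_mod_cast hn1
  have hα0 : 0 < α := lt_of_lt_of_le (by positivity) hα1
  have hαn1 : 1 ≤ α * n := by
    rw [div_le_iff₀ hnR] at hα1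
    linarith
  set k : ℕ := treewidth G + 1 with hk
  obtain ⟨D, hD⟩ : ∃ D : TreeDecomp G, ∀ i, (D.bag i).card ≤ k := by
    have hmem : (n - 1) ∈ {w | ∃ D : TreeDecomp G, ∀ i, (D.bag i).card ≤ w + 1} := by
      refine ⟨trivialDecomp G, fun i => ?_⟩
      show Finset.univ.card ≤ n - 1 + 1
      rw [Finset.card_univ]
      omega
    have hmem2 : treewidth G ∈ {w | ∃ D : TreeDecomp G, ∀ i, (D.bag i).card ≤ w + 1} :=
      Nat.sInf_mem (Set.nonempty_of_mem hmem)
    obtain ⟨D, hD⟩ := hmem2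
    exact ⟨D, fun i => by rw [hk]; exact hD i⟩
  suffices hlt : vertexExpansion G α * (α / 2) * n < (k : ℝ) by
    have h2 : vertexExpansion G α * (α / 2) * (n : ℝ) < ((k : ℤ) : ℝ) := by
      exact_mod_cast hlt
    have h3 := Int.floor_lt.2 h2
    have hk' : (k : ℤ) = (treewidth G : ℤ) + 1 := by rw [hk]; push_cast; ring
    omega
  set β : ℝ := α * n / 2 with hβ
  have hβ0 : 0 < β := by positivity
  set m : ℕ := ⌊α * n⌋₊ with hm
  have hm1 : 1 ≤ m := Nat.le_floor (by exact_mod_cast hαn1)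
  have hmle : (m : ℝ) ≤ α * n := Nat.floor_le (by positivity)
  have hmgt : β < m := by
    rcases le_or_gt 2 (α * n) with h | h
    · have h2 := Nat.lt_floor_add_one (α * n)
      rw [← hm] at h2
      rw [hβ]
      linarith
    · have hb1 : β < 1 := by rw [hβ]; linarith
      exact hb1.trans_le (by exact_mod_cast hm1)
  have hmn : (m : ℝ) ≤ n := le_trans hmle (by nlinarith)
  have hk1 : 1 ≤ k := by omega
  have hkR : (0 : ℝ) < k := by exact_mod_cast hk1
  -- the key step : find a good set X
  obtain ⟨X, hXne, hXle, hXgt, hNX⟩ :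
      ∃ X : Set V, X.Nonempty ∧ (X.ncard : ℝ) ≤ α * n ∧ β < (X.ncard : ℝ) ∧
        ((extNbhd G X).ncard : ℝ) ≤ k := by
    rcases le_or_gt ((n : ℝ)) ((k : ℝ) + m) with hcase | hcase
    · -- easy case: take any set of size m
      obtain ⟨X, hXsub, hXcard⟩ :=
        Set.exists_subset_card_eq (s := (Set.univ : Set V)) (n := m)
          (by rw [Set.ncard_univ, Nat.card_eq_fintype_card]; exact_mod_cast hmn)
      have hXcardR : (X.ncard : ℝ) = m := by rw [hXcard]
      refine ⟨X, ?_, by rw [hXcardR]; exact hmle, by rw [hXcardR]; exact hmgt, ?_⟩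
      · exact Set.nonempty_of_ncard_ne_zero (by omega)
      · have hsub : extNbhd G X ⊆ Xᶜ := fun u hu => hu.1
        have h1 : (extNbhd G X).ncard ≤ Xᶜ.ncard :=
          Set.ncard_le_ncard hsub (Set.toFinite _)
        have h2 : X.ncard + Xᶜ.ncard = n := by
          rw [Set.ncard_add_ncard_compl, Nat.card_eq_fintype_card]
      -- conclude over ℝ
        have : ((extNbhd G X).ncard : ℝ) ≤ (n : ℝ) - m := by
          have := h2
          have h1R : ((extNbhd G X).ncard : ℝ) ≤ (Xᶜ.ncard : ℝ) := by exact_mod_cast h1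
          have h2R : (X.ncard : ℝ) + (Xᶜ.ncard : ℝ) = (n : ℝ) := by exact_mod_cast h2
          rw [hXcardR] at h2R
          linarith
        linarith
    · -- hard case: use the tree decomposition
      have hsumfam : ∀ (t : D.ι) (P : D.ι → Prop),
          (∑ A ∈ D.fam t P, ((A.ncard : ℝ)))
            = (((⋃₀ ((D.fam t P : Set (Set V)))).ncard : ℝ)) := by
        intro t P
        rw [ncard_sUnion_eq _ (D.fam_disjoint)]
        push_cast
        rfl
      have hbag : ∀ t : D.ι, ((D.bag t).card : ℝ) ≤ k := fun t => by exact_mod_cast hD t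
      have hbagncard : ∀ t : D.ι, (((D.bag t : Set V)).ncard : ℝ) ≤ k := fun t => by
        rw [Set.ncard_coe_finset]; exact hbag t
      have htotnode : ∀ t : D.ι, β < ∑ A ∈ D.fam t (fun _ => True), ((A.ncard : ℝ)) := by
        intro t
        rw [hsumfam t (fun _ => True), D.sUnion_fam_true]
        have h1 : ((D.bag t : Set V)).ncard + ((D.bag t : Set V))ᶜ.ncard = n := by
          rw [Set.ncard_add_ncard_compl, Nat.card_eq_fintype_card]
        have h1R : (((D.bag t : Set V)).ncard : ℝ) + ((((D.bag t : Set V))ᶜ.ncard) : ℝ)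
            = (n : ℝ) := by exact_mod_cast h1
        have h2 := hbagncard t
        linarith
      -- a mini-lemma for packaging
      have package : ∀ X : Set V, β < (X.ncard : ℝ) → (X.ncard : ℝ) ≤ α * n →
          (∃ t : D.ι, extNbhd G X ⊆ (D.bag t : Set V)) →
          (∃ X : Set V, X.Nonempty ∧ (X.ncard : ℝ) ≤ α * n ∧ β < (X.ncard : ℝ) ∧
            ((extNbhd G X).ncard : ℝ) ≤ k) := by
        rintro X h1 h2 ⟨t, h3⟩
        refine ⟨X, ?_, h2, h1, ?_⟩
        · apply Set.nonempty_of_ncard_ne_zero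
          intro h0
          rw [h0] at h1
          simp only [Nat.cast_zero] at h1
          linarith
        · have h4 : (extNbhd G X).ncard ≤ ((D.bag t : Set V)).ncard :=
            Set.ncard_le_ncard h3 (Set.toFinite _)
          have h4R : ((extNbhd G X).ncard : ℝ) ≤ (((D.bag t : Set V)).ncard : ℝ) := by
            exact_mod_cast h4
          linarith [hbagncard t]
      set E' : Set (D.ι × D.ι) :=
        {e | D.T.Adj e.1 e.2 ∧ β < ((D.branch e.1 e.2).ncard : ℝ)} with hE'
      have h2β : 2 * β = α * n := by rw [hβ]; ring
      by_cases hE : E'.Nonempty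
      · -- pick a minimal element of E'
        obtain ⟨e, heE, hmin⟩ : ∃ e ∈ E', ∀ e' ∈ E', D.phi e.1 e.2 ≤ D.phi e'.1 e'.2 := by
          obtain ⟨e0, he0⟩ := hE
          have hne : ((fun e : D.ι × D.ι => D.phi e.1 e.2) '' E').Nonempty :=
            ⟨_, e0, he0, rfl⟩
          obtain ⟨e, heE, hphi⟩ := Nat.sInf_mem hne
          simp only at hphi
          refine ⟨e, heE, fun e' he' => ?_⟩
          rw [hphi]
          exact Nat.sInf_le ⟨e', he', rfl⟩
        obtain ⟨t, t'⟩ := e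
        have hadj : D.T.Adj t t' := heE.1
        have hA : β < ((D.branch t t').ncard : ℝ) := heE.2
        rcases le_or_gt ((D.branch t t').ncard : ℝ) (α * n) with hsmall | hbig
        · -- the branch itself works
          refine package (D.branch t t') hA hsmall ⟨t, ?_⟩
          rintro u ⟨huX, v, hv, hadjv⟩
          by_contra hu
          exact huX (D.adj_mem_branch hv hadjv hu)
        · -- the branch is too big; look at its sub-branches at t'
          have hmem' : ∀ A ∈ D.fam t' (· ≠ t), ((A.ncard : ℝ)) ≤ β := by
            intro A hAf
            by_contra hgt
            push_neg at hgt
            obtain ⟨hAne, t'', hadj2, hne, rfl⟩ := D.mem_fam.1 hAf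
            have hmemE : ((t', t'') : D.ι × D.ι) ∈ E' := ⟨hadj2, hgt⟩
            have h1 := hmin _ hmemE
            have h2 := D.phi_lt hadj hadj2 hne hAne
            simp only at h1
            omega
          rcases lt_or_ge β (∑ A ∈ D.fam t' (· ≠ t), ((A.ncard : ℝ))) with hT0 | hT0
          · -- greedy over the sub-branches
            obtain ⟨X, h1, h2, h3, h4⟩ := D.exists_good_union hβ0.le hmem' hT0
            exact package X h2 (by rw [← h2β]; exact h3) ⟨t', h4⟩
          · -- interpolate between A \ bag t' and A
            have heq := hsumfam t' (· ≠ t)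
            rw [D.sUnion_fam_away hadj] at heq
            have hT0' : (((D.branch t t' \ (D.bag t' : Set V)).ncard : ℝ)) ≤ β := by
              rw [← heq]
              exact hT0
            have hs1 : (D.branch t t' \ (D.bag t' : Set V)).ncard ≤ m := by
              have hlt := lt_of_le_of_lt hT0' hmgt
              exact_mod_cast hlt.le
            have hs2 : m ≤ (D.branch t t').ncard := by
              have : (m : ℝ) ≤ ((D.branch t t').ncard : ℝ) := le_trans hmle hbig.le
              exact_mod_cast this
            obtain ⟨X, hX1, hX2, hX3⟩ :=
              Set.exists_subsuperset_card_eq (Set.diff_subset) hs1 hs2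
            have hX3R : (X.ncard : ℝ) = m := by rw [hX3]
            refine package X (by rw [hX3R]; exact hmgt) (by rw [hX3R]; exact hmle)
              ⟨t', ?_⟩
            rintro u ⟨huX, v, hv, hadjv⟩
            by_cases huA : u ∈ D.branch t t'
            · by_contra hub
              exact huX (hX1 ⟨huA, hub⟩)
            · exact D.mem_bag_head hadj (hX2 hv) hadjv huA
      · -- no heavy branch anywhere: greedy at any node
        have hne : Nonempty D.ι := D.tree.isConnected.nonempty
        set t : D.ι := Classical.arbitrary D.ι
        have hmem' : ∀ A ∈ D.fam t (fun _ => True), ((A.ncard : ℝ)) ≤ β := by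
          intro A hAf
          by_contra hgt
          push_neg at hgt
          obtain ⟨hAne, t'', hadj2, -, rfl⟩ := D.mem_fam.1 hAf
          exact hE ⟨(t, t''), hadj2, hgt⟩
        obtain ⟨X, h1, h2, h3, h4⟩ := D.exists_good_union hβ0.le hmem' (htotnode t)
        exact package X h2 (by rw [← h2β]; exact h3) ⟨t, h4⟩
  -- final arithmetic
  have hvE : vertexExpansion G α ≤ ((extNbhd G X).ncard : ℝ) / (X.ncard : ℝ) := by
    apply csInf_le
    · refine ⟨0, ?_⟩
      rintro r ⟨Y, hY1, hY2, rfl⟩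
      positivity
    · exact ⟨X, hXne, by rw [← hn]; exact hXle, rfl⟩
  have hX0 : (0 : ℝ) < X.ncard := hβ0.trans hXgt
  have hprod : vertexExpansion G α * X.ncard ≤ ((extNbhd G X).ncard : ℝ) := by
    rw [← le_div_iff₀ hX0]
    exact hvE
  have hend : vertexExpansion G α * (α / 2) * n = vertexExpansion G α * β := by
    rw [hβ]
    ring
  rw [hend]
  rcases le_or_gt (vertexExpansion G α) 0 with h | h
  · have hle : vertexExpansion G α * β ≤ 0 := mul_nonpos_of_nonpos_of_nonneg h hβ0.le
    linarith
  · have h1 : vertexExpansion G α * β < vertexExpansion G α * X.ncard :=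
      mul_lt_mul_of_pos_left hXgt h
    linarith
end

section
/- If G is a graph on n vertices with x_{1/2}(G) ≥ 1/2, then tw(G) ≥ ⌊n/8⌋. -/
/-!
Every tree decomposition has a bag `B` such that each component of `G - B` has at most `n / 2`
vertices. Indeed, pick a bag `home v ∋ v` for every vertex and let `j` minimise
`Φ j = ∑ v, dist (home v) j`; if `G - bag j` had a component `C` with `|C| > n / 2`, it would lie
behind a single tree edge `j j'`, and moving to `j'` brings the more than `n / 2` home bags of `C`
one step closer while moving every other home bag at most one step away, so `Φ j' < Φ j`.

If `|B| < 3n / 4`, the components of `G - B` (each of size at most `n / 2`) can be grouped into a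
set `X` with `n / 4 < |X| ≤ n / 2`. Its external neighbourhood lies in `B`, so expansion gives
`n / 4 < |X| ≤ 2 |N(X)| ≤ 2 |B|`. Either way `n < 8 |B| ≤ 8 (tw(G) + 1)`.
-/

lemma Fintype.sum_lt_sum_of_lt_on_majority {α : Type*} [Fintype α] {f g : α → ℕ} {S : Set α}
    (hS : ∀ x ∈ S, g x < f x) (hle : ∀ x, g x ≤ f x + 1) (hmaj : Fintype.card α < 2 * S.ncard) :
    ∑ x, g x < ∑ x, f x := by
  classical
  have key : ∀ x, g x + 2 * (if x ∈ S then 1 else 0) ≤ f x + 1 := fun x => by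
    split_ifs with hx
    · have := hS x hx
      omega
    · simpa using hle x
  have hsum := Finset.sum_le_sum fun x (_ : x ∈ Finset.univ) => key x
  rw [Finset.sum_add_distrib, Finset.sum_add_distrib, ← Finset.mul_sum, Finset.sum_boole,
    Finset.sum_const, Finset.card_univ, smul_eq_mul, mul_one, Nat.cast_id,
    ← Set.ncard_coe_finset, Finset.coe_filter_univ, Set.ofPred_mem_eq] at hsum
  omega

lemma Finset.exists_subset_sum_mem_Ioc {α : Type*} [DecidableEq α] (f : α → ℕ) (a : ℕ)
    (s : Finset α) (hf : ∀ x ∈ s, f x ≤ 2 * a) (hs : a < ∑ x ∈ s, f x) :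
    ∃ t ⊆ s, ∑ x ∈ t, f x ∈ Set.Ioc a (2 * a) := by
  induction s using Finset.induction_on with
  | empty => simp at hs
  | @insert x s hx ih =>
    by_cases hrest : a < ∑ y ∈ s, f y
    · obtain ⟨t, hts, ht⟩ := ih (fun y hy => hf y (Finset.mem_insert_of_mem hy)) hrest
      exact ⟨t, hts.trans (Finset.subset_insert x s), ht⟩
    by_cases hbig : a < f x
    · exact ⟨{x}, by simp, by simpa using ⟨hbig, hf x (Finset.mem_insert_self x s)⟩⟩
    refine ⟨insert x s, subset_rfl, hs, ?_⟩
    rw [Finset.sum_insert hx]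
    omega

open SimpleGraph

namespace SimpleGraph

variable {ι : Type*} {T : SimpleGraph ι}

lemma IsTree.reachable_deleteEdges_iff_dist_lt (hT : T.IsTree) {i j k : ι} (h : T.Adj i j) :
    (T.deleteEdges {s(i, j)}).Reachable k j ↔ T.dist k j < T.dist k i := by
  have of_lt : ∀ {i j : ι}, T.dist k j < T.dist k i →
      (T.deleteEdges {s(i, j)}).Reachable k j := by
    classical
    intro i j hlt
    obtain ⟨p, hp⟩ := hT.connected.exists_walk_length_eq_dist k j
    -- a shortest walk from `k` to `j` cannot visit the farther vertex `i`
    refine ⟨p.toDeleteEdge _ fun he => ?_⟩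
    have hi := p.fst_mem_support_of_mem_edges he
    have := (T.dist_le (p.takeUntil i hi)).trans (p.length_takeUntil_le_length hi)
    omega
  refine ⟨fun hj => ?_, of_lt⟩
  by_contra! hle
  have hi : (T.deleteEdges {s(i, j)}).Reachable k i := by
    rw [Sym2.eq_swap]
    exact of_lt (hle.lt_of_ne (hT.dist_ne_of_adj k h))
  exact isBridge_iff.mp (isAcyclic_iff_forall_adj_isBridge.mp hT.isAcyclic h) (hi.symm.trans hj)

lemma IsTree.dist_lt_of_walk_of_not_mem_support (hT : T.IsTree) {j j' a b : ι} (h : T.Adj j j')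
    (p : T.Walk a b) (hp : j ∉ p.support) (hb : T.dist b j' < T.dist b j) :
    T.dist a j' < T.dist a j := by
  rw [← hT.reachable_deleteEdges_iff_dist_lt h] at hb ⊢
  exact .trans ⟨p.toDeleteEdge _ fun he => hp (p.fst_mem_support_of_mem_edges he)⟩ hb

lemma Connected.exists_adj_dist_lt (hT : T.Connected) {j t : ι} (h : j ≠ t) :
    ∃ j', T.Adj j j' ∧ T.dist t j' < T.dist t j := by
  obtain ⟨p, hp⟩ := hT.exists_walk_length_eq_dist j t
  obtain ⟨j', hj', q, rfl⟩ := Walk.exists_eq_cons_of_ne h p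
  refine ⟨j', hj', ?_⟩
  rw [dist_comm, dist_comm (u := t)]
  have := T.dist_le q
  simp only [Walk.length_cons] at hp
  omega

def IsBalancedSeparator {V : Type*} [Fintype V] (G : SimpleGraph V) (B : Set V) : Prop :=
  ∀ c : (G.induce Bᶜ).ConnectedComponent, 2 * c.supp.ncard ≤ Fintype.card V

end SimpleGraph

namespace TreeDecomp

variable {V : Type} {G : SimpleGraph V} (D : TreeDecomp G)

lemma dist_lt_of_mem_bag {u : V} {j j' t₁ t₂ : D.ι} (hj : D.T.Adj j j') (hu : u ∉ D.bag j)
    (h₁ : u ∈ D.bag t₁) (h₂ : u ∈ D.bag t₂) (ht₁ : D.T.dist t₁ j' < D.T.dist t₁ j) :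
    D.T.dist t₂ j' < D.T.dist t₂ j := by
  obtain ⟨p⟩ := (D.coherent u).preconnected ⟨t₂, h₂⟩ ⟨t₁, h₁⟩
  have hp : j ∉ (p.map (Embedding.induce {i | u ∈ D.bag i}).toHom).support := by
    rw [Walk.support_map, List.mem_map]
    rintro ⟨k, -, rfl⟩
    exact hu k.2
  exact D.tree.dist_lt_of_walk_of_not_mem_support hj _ hp ht₁

lemma dist_lt_of_reachable {j j' : D.ι} (hj : D.T.Adj j j') {x y : ↥(D.bag j : Set V)ᶜ}
    (hxy : (G.induce (D.bag j : Set V)ᶜ).Reachable x y)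
    (hx : ∀ t, ↑x ∈ D.bag t → D.T.dist t j' < D.T.dist t j) :
    ∀ t, ↑y ∈ D.bag t → D.T.dist t j' < D.T.dist t j := by
  rw [reachable_iff_reflTransGen] at hxy
  induction hxy with
  | refl => exact hx
  | @tail z w _ hzw ih =>
    obtain ⟨t, hz, hw⟩ := D.edge_bag z w hzw
    exact fun t' ht' => D.dist_lt_of_mem_bag hj w.2 hw ht' (ih t hz)

lemma exists_isBalancedSeparator_bag [Fintype V] : ∃ j, G.IsBalancedSeparator (D.bag j) := by
  have : Nonempty D.ι := D.tree.connected.nonempty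
  choose home hhome using D.mem_bag
  let Φ : D.ι → ℕ := fun j => ∑ v, D.T.dist (home v) j
  obtain ⟨j, hj⟩ : ∃ j, ∀ j', Φ j ≤ Φ j' := ⟨Function.argmin Φ, fun j' => Function.argmin_le Φ j'⟩
  refine ⟨j, fun c => ?_⟩
  by_contra! hc
  obtain ⟨x, hx⟩ : c.supp.Nonempty := Set.nonempty_of_ncard_ne_zero (by omega)
  have hxj : j ≠ home x := fun h => x.2 (by simpa [h] using hhome x)
  obtain ⟨j', hj', hx'⟩ := D.tree.connected.exists_adj_dist_lt hxj
  have hcloser : ∀ v ∈ Subtype.val '' c.supp, D.T.dist (home v) j' < D.T.dist (home v) j := by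
    rintro _ ⟨y, hy, rfl⟩
    exact D.dist_lt_of_reachable hj' (ConnectedComponent.exact (hx.trans hy.symm))
      (fun t ht => D.dist_lt_of_mem_bag hj' x.2 (hhome x) ht hx') _ (hhome y)
  refine (hj j').not_gt (Fintype.sum_lt_sum_of_lt_on_majority hcloser (fun v => ?_) ?_)
  · have := D.tree.connected.dist_triangle (u := home v) (v := j) (w := j')
    rwa [dist_eq_one_iff_adj.mpr hj'] at this
  · rwa [Set.ncard_image_of_injective _ Subtype.val_injective]

def singleBag [Fintype V] (G : SimpleGraph V) : TreeDecomp G where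
  ι := Unit
  T := ⊥
  tree := .of_subsingleton
  bag _ := Finset.univ
  mem_bag v := ⟨(), Finset.mem_univ v⟩
  edge_bag u v _ := ⟨(), Finset.mem_univ u, Finset.mem_univ v⟩
  coherent v := (@IsTree.of_subsingleton _ ⟨⟨(), Finset.mem_univ v⟩⟩ _ _).connected

end TreeDecomp

lemma exists_treeDecomp_card_bag_le_treewidth_add_one {V : Type} [Fintype V]
    (G : SimpleGraph V) : ∃ D : TreeDecomp G, ∀ i, (D.bag i).card ≤ treewidth G + 1 :=
  Nat.sInf_mem (⟨Fintype.card V, TreeDecomp.singleBag G,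
    fun _ => (Finset.card_le_univ _).trans (Nat.le_succ _)⟩ :
      {w | ∃ D : TreeDecomp G, ∀ i, (D.bag i).card ≤ w + 1}.Nonempty)

section UnionOfComponents

variable {V : Type} {G : SimpleGraph V} {S : Set V}

lemma extNbhd_image_val_preimage_connectedComponentMk_subset
    (t : Set (G.induce S).ConnectedComponent) :
    extNbhd G (Subtype.val '' ((G.induce S).connectedComponentMk ⁻¹' t)) ⊆ Sᶜ := by
  rintro v ⟨hvX, _, ⟨u, hu, rfl⟩, huv⟩ hv
  refine hvX ⟨⟨v, hv⟩, ?_, rfl⟩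
  rwa [Set.mem_preimage, ← ConnectedComponent.connectedComponentMk_eq_of_adj
    (show (G.induce S).Adj u ⟨v, hv⟩ from huv)]

lemma ncard_image_val_preimage_connectedComponentMk [Finite V]
    (t : Finset (G.induce S).ConnectedComponent) :
    (Subtype.val '' ((G.induce S).connectedComponentMk ⁻¹' t)).ncard =
      ∑ c ∈ t, c.supp.ncard := by
  classical
  have := Fintype.ofFinite V
  rw [Set.ncard_image_of_injective _ Subtype.val_injective]
  simp only [Set.ncard_eq_toFinset_card', ConnectedComponent.supp, Set.preimage,
    Finset.mem_coe, Set.toFinset_ofPred]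
  exact (Finset.sum_card_fiberwise_eq_card_filter _ _ _).symm

end UnionOfComponents

section Expansion

variable {V : Type} [Fintype V] {G : SimpleGraph V}

lemma mul_ncard_le_ncard_extNbhd {α r : ℝ} (hr : r ≤ vertexExpansion G α) {X : Set V}
    (hX : X.Nonempty) (hXα : (X.ncard : ℝ) ≤ α * Fintype.card V) :
    r * X.ncard ≤ (extNbhd G X).ncard := by
  have hbdd : BddBelow {r : ℝ | ∃ X : Set V, X.Nonempty ∧ (X.ncard : ℝ) ≤ α * Fintype.card V ∧
      r = (extNbhd G X).ncard / X.ncard} := ⟨0, by rintro _ ⟨Y, -, -, rfl⟩; positivity⟩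
  have hpos : (0 : ℝ) < X.ncard := by exact_mod_cast (Set.ncard_pos X.toFinite).mpr hX
  rw [← le_div_iff₀ hpos]
  exact hr.trans (csInf_le hbdd ⟨X, hX, hXα, rfl⟩)

lemma ncard_le_two_mul_ncard_extNbhd (hexp : (1 : ℝ) / 2 ≤ vertexExpansion G (1 / 2))
    {X : Set V} (hX : 2 * X.ncard ≤ Fintype.card V) : X.ncard ≤ 2 * (extNbhd G X).ncard := by
  obtain rfl | hne := X.eq_empty_or_nonempty
  · simp
  have hXn : (2 * X.ncard : ℝ) ≤ Fintype.card V := by exact_mod_cast hX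
  have := mul_ncard_le_ncard_extNbhd hexp hne (by linarith)
  exact_mod_cast (by linarith : (X.ncard : ℝ) ≤ 2 * (extNbhd G X).ncard)

lemma card_lt_eight_mul_ncard_of_isBalancedSeparator [Nonempty V]
    (hexp : (1 : ℝ) / 2 ≤ vertexExpansion G (1 / 2)) {B : Set V} (hB : G.IsBalancedSeparator B) :
    Fintype.card V < 8 * B.ncard := by
  classical
  set n := Fintype.card V
  have hn : 0 < n := Fintype.card_pos
  have hBn : B.ncard + Bᶜ.ncard = n := by rw [Set.ncard_add_ncard_compl, Nat.card_eq_fintype_card]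
  have hsum : ∑ c : (G.induce Bᶜ).ConnectedComponent, c.supp.ncard = Bᶜ.ncard := by
    rw [← ncard_image_val_preimage_connectedComponentMk, Finset.coe_univ, Set.preimage_univ,
      Set.image_univ, Subtype.range_coe]
  by_cases hsmall : 4 * Bᶜ.ncard ≤ n
  · omega
  obtain ⟨t, -, hlow, hhigh⟩ := Finset.exists_subset_sum_mem_Ioc
    (fun c : (G.induce Bᶜ).ConnectedComponent => 4 * c.supp.ncard) n Finset.univ
    (fun c _ => by have := hB c; omega) (by rw [← Finset.mul_sum, hsum]; omega)
  rw [← Finset.mul_sum, ← ncard_image_val_preimage_connectedComponentMk] at hlow hhigh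
  set X := Subtype.val '' ((G.induce Bᶜ).connectedComponentMk ⁻¹' t)
  have hNB : (extNbhd G X).ncard ≤ B.ncard := by
    simpa using Set.ncard_le_ncard (extNbhd_image_val_preimage_connectedComponentMk_subset
      (t : Set (G.induce Bᶜ).ConnectedComponent))
  have := ncard_le_two_mul_ncard_extNbhd hexp (X := X) (by omega)
  omega

end Expansion

/-- If `x_{1/2}(G) ≥ 1/2` on `n` vertices, then `tw(G) ≥ ⌊n / 8⌋`. -/
theorem treewidth_ge_of_expander {V : Type} [Fintype V] [Nonempty V]
    (G : SimpleGraph V) (hexp : (1 : ℝ) / 2 ≤ vertexExpansion G (1 / 2)) :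
    Fintype.card V / 8 ≤ treewidth G := by
  obtain ⟨D, hD⟩ := exists_treeDecomp_card_bag_le_treewidth_add_one G
  obtain ⟨j, hj⟩ := D.exists_isBalancedSeparator_bag
  have hsep := card_lt_eight_mul_ncard_of_isBalancedSeparator hexp hj
  rw [Set.ncard_coe_finset] at hsep
  have := hD j
  omega
end
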